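/- Let T₁, ..., T_{2N} be i.i.d. half-normal random variables with scale parameter σ̄ (i.e., Tⱼ = |Z| with Z ~ N(0, σ̄²)). Then E[max_j Tⱼ] ≤ σ̄√(2 ln N) + σ̄ √(2/π) / ln N for N > 1. -/

import Mathlib

open MeasureTheory ProbabilityTheory Real Set Filter

lemma aux_int_x_exp {b : ℝ} (hb : 0 < b) (s : ℝ) :
    ∫ x in Set.Ioi s, x * Real.exp (-b * x ^ 2) = Real.exp (-b * s ^ 2) / (2 * b) := by
  have hderiv : ∀ x ∈ Set.Ici s, HasDerivAt (fun y => -Real.exp (-b * y ^ 2) / (2 * b))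
      (x * Real.exp (-b * x ^ 2)) x := by
    intro x _
    have h1 : HasDerivAt (fun y : ℝ => -b * y ^ 2) (-b * (2 * x)) x := by
      simpa using (hasDerivAt_pow 2 x).const_mul (-b)
    have h2 := (h1.exp).neg.div_const (2 * b)
    refine h2.congr_deriv ?_
    rw [div_eq_iff (by positivity)]
    ring
  have hlim : Tendsto (fun y => -Real.exp (-b * y ^ 2) / (2 * b)) atTop (nhds 0) := by
    have h0 : Tendsto (fun y : ℝ => -b * y ^ 2) atTop atBot := by
      exact (tendsto_pow_atTop (two_ne_zero)).const_mul_atTop_of_neg (neg_neg_iff_pos.2 hb)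
    have := (Real.tendsto_exp_atBot.comp h0).neg.div_const (2 * b)
    simpa using this
  have := integral_Ioi_of_hasDerivAt_of_tendsto' hderiv
    ((integrable_mul_exp_neg_mul_sq hb).integrableOn) hlim
  rw [this]
  ring

lemma aux_int_exp {k : ℝ} (hk : 0 < k) :
    ∫ t in Set.Ioi (0:ℝ), Real.exp (-k * t) = 1 / k := by
  have hderiv : ∀ x ∈ Set.Ici (0:ℝ), HasDerivAt (fun y => -Real.exp (-k * y) / k)
      (Real.exp (-k * x)) x := by
    intro x _
    have h1 : HasDerivAt (fun y : ℝ => -k * y) (-k) x := by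
      simpa using (hasDerivAt_id x).const_mul (-k)
    have h2 := (h1.exp).neg.div_const k
    refine h2.congr_deriv ?_
    rw [div_eq_iff hk.ne']
    ring
  have hlim : Tendsto (fun y => -Real.exp (-k * y) / k) atTop (nhds 0) := by
    have h0 : Tendsto (fun y : ℝ => -k * y) atTop atBot :=
      tendsto_id.const_mul_atTop_of_neg (neg_neg_iff_pos.2 hk)
    have := (Real.tendsto_exp_atBot.comp h0).neg.div_const k
    simpa using this
  have := integral_Ioi_of_hasDerivAt_of_tendsto' hderiv (exp_neg_integrableOn_Ioi 0 hk) hlim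
  rw [this]
  simp [div_eq_mul_inv]

lemma aux_abs_exp_integrable {b : ℝ} (hb : 0 < b) :
    Integrable (fun x : ℝ => |x| * Real.exp (-b * x ^ 2)) := by
  have := (integrable_mul_exp_neg_mul_sq hb).abs
  refine this.congr (ae_of_all _ fun x => ?_)
  simp only [abs_mul, abs_of_pos (Real.exp_pos _)]

lemma aux_pdf_eq (σ : ℝ) (hσ : 0 < σ) (x : ℝ) :
    gaussianPDFReal 0 (Real.toNNReal (σ^2)) x
      = (Real.sqrt (2*π) * σ)⁻¹ * Real.exp (-(2*σ^2)⁻¹ * x^2) := by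
  rw [gaussianPDFReal]
  have hv : ((Real.toNNReal (σ^2)) : ℝ) = σ^2 := Real.coe_toNNReal _ (by positivity)
  rw [hv]
  have h1 : Real.sqrt (2*π*σ^2) = Real.sqrt (2*π) * σ := by
    rw [Real.sqrt_mul (by positivity), Real.sqrt_sq hσ.le]
  rw [h1]
  congr 1
  rw [sub_zero]
  field_simp

lemma gauss_tail (σ : ℝ) (hσ : 0 < σ) (s : ℝ) (hs : 0 < s) :
    ((gaussianReal 0 (Real.toNNReal (σ^2))) {z | s < |z|}).toReal
      ≤ 2*σ/(s*Real.sqrt (2*π)) * Real.exp (-s^2/(2*σ^2)) := by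
  have hvne : Real.toNNReal (σ^2) ≠ 0 := by
    simp only [ne_eq, Real.toNNReal_eq_zero, not_le]
    positivity
  set b : ℝ := (2*σ^2)⁻¹ with hb_def
  have hb : 0 < b := by positivity
  set c : ℝ := (Real.sqrt (2*π) * σ)⁻¹ with hc_def
  have hc : 0 < c := by positivity
  have hA : {z : ℝ | s < |z|} = Set.Iio (-s) ∪ Set.Ioi s := by
    ext x
    simp only [Set.mem_setOf_eq, Set.mem_union, Set.mem_Iio, Set.mem_Ioi, lt_abs]
    constructor
    · rintro (h | h)
      · exact Or.inr h
      · exact Or.inl (by linarith)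
    · rintro (h | h)
      · exact Or.inr (by linarith)
      · exact Or.inl h
  rw [gaussianReal_apply_eq_integral _ hvne]
  rw [ENNReal.toReal_ofReal (by
    apply integral_nonneg
    intro x
    exact gaussianPDFReal_nonneg _ _ _)]
  -- bound the integral
  have hint_pdf : IntegrableOn (fun x => gaussianPDFReal 0 (Real.toNNReal (σ^2)) x)
      {z : ℝ | s < |z|} := (integrable_gaussianPDFReal _ _).integrableOn
  have hintg : Integrable (fun x : ℝ => (|x|/s) * (c * Real.exp (-b * x^2))) := by
    have := ((aux_abs_exp_integrable hb).const_mul (c/s))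
    refine this.congr (ae_of_all _ fun x => ?_)
    ring
  have hmeasA : MeasurableSet {z : ℝ | s < |z|} := by
    rw [hA]; exact measurableSet_Iio.union measurableSet_Ioi
  have step1 : ∫ x in {z : ℝ | s < |z|}, gaussianPDFReal 0 (Real.toNNReal (σ^2)) x
      ≤ ∫ x in {z : ℝ | s < |z|}, (|x|/s) * (c * Real.exp (-b * x^2)) := by
    refine setIntegral_mono_on hint_pdf hintg.integrableOn hmeasA fun x hx => ?_
    rw [aux_pdf_eq σ hσ x]
    have h1 : (1:ℝ) ≤ |x|/s := (one_le_div hs).2 (le_of_lt hx)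
    calc c * Real.exp (-b * x^2) = 1 * (c * Real.exp (-b * x^2)) := by ring
      _ ≤ (|x|/s) * (c * Real.exp (-b * x^2)) := by
          apply mul_le_mul_of_nonneg_right h1 (by positivity)
  have step2 : ∫ x in {z : ℝ | s < |z|}, (|x|/s) * (c * Real.exp (-b * x^2))
      = 2 * ((c/s) * (Real.exp (-b * s^2) / (2*b))) := by
    have hdisj : Disjoint (Set.Iio (-s)) (Set.Ioi s) := by
      apply Set.disjoint_left.2
      intro x hx hx'
      simp only [Set.mem_Iio] at hx
      simp only [Set.mem_Ioi] at hx'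
      linarith
    rw [hA, setIntegral_union hdisj measurableSet_Ioi hintg.integrableOn hintg.integrableOn]
    have hneg : ∫ x in Set.Iio (-s), (|x|/s) * (c * Real.exp (-b * x^2))
        = ∫ x in Set.Ioi s, (|x|/s) * (c * Real.exp (-b * x^2)) := by
      rw [setIntegral_congr_set Iio_ae_eq_Iic,
        ← integral_comp_neg_Ioi s (fun x => |x|/s * (c * Real.exp (-b * x^2)))]
      apply setIntegral_congr_fun measurableSet_Ioi
      intro x _
      simp only [abs_neg, neg_sq]
    have hIoi : ∫ x in Set.Ioi s, (|x|/s) * (c * Real.exp (-b * x^2))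
        = (c/s) * (Real.exp (-b * s^2) / (2*b)) := by
      have : ∫ x in Set.Ioi s, (|x|/s) * (c * Real.exp (-b * x^2))
          = ∫ x in Set.Ioi s, (c/s) * (x * Real.exp (-b * x^2)) := by
        apply setIntegral_congr_fun measurableSet_Ioi
        intro x hx
        simp only [abs_of_pos (hs.trans hx)]
        ring
      rw [this, integral_const_mul, aux_int_x_exp hb s]
    rw [hneg, hIoi]
    ring
  refine step1.trans (le_of_eq ?_)
  rw [step2]
  have hsqrt : Real.sqrt (2*π) > 0 := by positivity
  have hexp : Real.exp (-b * s^2) = Real.exp (-s^2/(2*σ^2)) := by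
    congr 1
    rw [hb_def]
    field_simp
  rw [hexp, hc_def, hb_def]
  field_simp

theorem expectation_max_halfNormal_le (N : ℕ) (hN : 1 < N)
    {Ω : Type*} [MeasurableSpace Ω] (P : Measure Ω) [IsProbabilityMeasure P]
    (σbar : ℝ) (hσ : 0 < σbar)
    (T : Fin (2 * N) → Ω → ℝ) (hmeas : ∀ j, Measurable (T j))
    (hIndep : iIndepFun T P)
    (hdist : ∀ j, Measure.map (T j) P =
      Measure.map (fun z : ℝ => |z|) (gaussianReal 0 (Real.toNNReal (σbar ^ 2)))) :
    ∫ ω, (Finset.univ.sup' (Finset.univ_nonempty_iff.mpr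
        ⟨⟨0, by positivity⟩⟩) fun j => T j ω) ∂P
      ≤ σbar * Real.sqrt (2 * Real.log N)
          + σbar * Real.sqrt (2 / π) / Real.log N := by
  have hNpos : (0:ℝ) < N := by positivity
  have hL : 0 < Real.log N := Real.log_pos (by exact_mod_cast hN)
  set L : ℝ := Real.log N with hL_def
  set a : ℝ := σbar * Real.sqrt (2 * L) with ha_def
  have ha : 0 < a := by
    apply mul_pos hσ
    apply Real.sqrt_pos.2
    positivity
  have hne : (Finset.univ : Finset (Fin (2*N))).Nonempty :=
    ⟨⟨0, by positivity⟩, Finset.mem_univ _⟩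
  set M : Ω → ℝ := fun ω => Finset.univ.sup' hne (fun j => T j ω) with hM_def
  show ∫ ω, M ω ∂P ≤ σbar * Real.sqrt (2 * L) + σbar * Real.sqrt (2 / π) / L
  set μg := gaussianReal 0 (Real.toNNReal (σbar ^ 2)) with hμg_def
  -- tail bound for each T j
  have hmap : ∀ j (s : Set ℝ), MeasurableSet s → P (T j ⁻¹' s) = μg ((fun z : ℝ => |z|) ⁻¹' s) := by
    intro j s hsm
    rw [← Measure.map_apply (hmeas j) hsm, hdist j,
      Measure.map_apply (measurable_abs) hsm]
  have hTtail : ∀ (j : Fin (2*N)) (s : ℝ), 0 < s →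
      (P {ω | s < T j ω}).toReal ≤ 2*σbar/(s*Real.sqrt (2*π)) * Real.exp (-s^2/(2*σbar^2)) := by
    intro j s hs
    have h1 : P {ω | s < T j ω} = μg {z | s < |z|} := by
      have := hmap j (Set.Ioi s) measurableSet_Ioi
      simpa [Set.preimage, Set.mem_Ioi] using this
    rw [h1]
    exact gauss_tail σbar hσ s hs
  -- nonnegativity a.e.
  have hTnn : ∀ j, ∀ᵐ ω ∂P, 0 ≤ T j ω := by
    intro j
    rw [ae_iff]
    have : {ω | ¬ 0 ≤ T j ω} = T j ⁻¹' (Set.Iio 0) := by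
      ext ω; simp [Set.mem_Iio, not_le]
    rw [this, hmap j (Set.Iio 0) measurableSet_Iio]
    have : (fun z : ℝ => |z|) ⁻¹' (Set.Iio 0) = ∅ := by
      ext z; simp [Set.mem_Iio, abs_nonneg, not_lt, (abs_nonneg z)]
    rw [this, measure_empty]
  -- integrability of T j
  have hvne : Real.toNNReal (σbar^2) ≠ 0 := by
    simp only [ne_eq, Real.toNNReal_eq_zero, not_le]
    positivity
  have habs : Integrable (fun z : ℝ => |z|) μg := by
    rw [hμg_def, gaussianReal_of_var_ne_zero _ hvne]
    rw [integrable_withDensity_iff (measurable_gaussianPDF _ _)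
      (ae_of_all _ fun x => ENNReal.ofReal_lt_top)]
    have hb : (0:ℝ) < (2*σbar^2)⁻¹ := by positivity
    refine ((aux_abs_exp_integrable hb).const_mul ((Real.sqrt (2*π) * σbar)⁻¹)).congr
      (ae_of_all _ fun x => ?_)
    simp only [gaussianPDF_def]
    rw [ENNReal.toReal_ofReal (gaussianPDFReal_nonneg _ _ _), aux_pdf_eq σbar hσ x]
    ring
  have hTint : ∀ j, Integrable (T j) P := by
    intro j
    have h1 : Integrable id (Measure.map (T j) P) := by
      rw [hdist j]
      rw [integrable_map_measure aestronglyMeasurable_id measurable_abs.aemeasurable]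
      exact habs
    rwa [integrable_map_measure aestronglyMeasurable_id (hmeas j).aemeasurable] at h1
  -- M is measurable and integrable
  have hMmeas : Measurable M := by
    have h := Finset.measurable_sup' hne (fun j _ => hmeas j)
    have : M = Finset.univ.sup' hne T := by
      funext ω
      exact (Finset.sup'_apply hne T ω).symm
    rwa [this]
  have hSint : Integrable (fun ω => ∑ j, T j ω) P :=
    integrable_finset_sum _ (fun j _ => hTint j)
  have hMbd : ∀ᵐ ω ∂P, ‖M ω‖ ≤ ∑ j, T j ω := by
    filter_upwards [ae_all_iff.2 hTnn] with ω hω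
    have hMle : M ω ≤ ∑ j, T j ω := by
      apply Finset.sup'_le
      intro j _
      exact Finset.single_le_sum (fun i _ => hω i) (Finset.mem_univ j)
    have hMnn : 0 ≤ M ω := by
      refine le_trans (hω ⟨0, by positivity⟩) ?_
      exact Finset.le_sup' (fun j => T j ω) (Finset.mem_univ (⟨0, by positivity⟩ : Fin (2*N)))
    rwa [Real.norm_of_nonneg hMnn]
  have hMint : Integrable M P := hSint.mono' hMmeas.aestronglyMeasurable hMbd
  -- the positive part
  set f : Ω → ℝ := fun ω => max (M ω - a) 0 with hf_def
  have hfint : Integrable f P := (hMint.sub (integrable_const a)).pos_part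
  have step1 : ∫ ω, M ω ∂P ≤ a + ∫ ω, f ω ∂P := by
    have hle : ∀ ω, M ω ≤ a + f ω := by
      intro ω
      have := le_max_left (M ω - a) 0
      simp only [hf_def]
      linarith
    calc ∫ ω, M ω ∂P ≤ ∫ ω, (a + f ω) ∂P :=
          integral_mono hMint ((integrable_const a).add hfint) hle
      _ = a + ∫ ω, f ω ∂P := by
          rw [integral_add (integrable_const a) hfint, integral_const]
          simp
  have step2 : ∫ ω, f ω ∂P = ∫ t in Set.Ioi (0:ℝ), (P {ω | t < f ω}).toReal :=
    hfint.integral_eq_integral_meas_lt (ae_of_all _ fun ω => le_max_right _ _)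
  -- pointwise tail bound
  set k : ℝ := a / σbar^2 with hk_def
  have hk : 0 < k := by positivity
  set C : ℝ := (2*N) * (2*σbar/(a*Real.sqrt (2*π)) * Real.exp (-a^2/(2*σbar^2))) with hC_def
  have hpt : ∀ t ∈ Set.Ioi (0:ℝ), (P {ω | t < f ω}).toReal ≤ C * Real.exp (-k * t) := by
    intro t ht
    rw [Set.mem_Ioi] at ht
    have hset : {ω | t < f ω} = {ω | a + t < M ω} := by
      ext ω
      simp only [hf_def, Set.mem_setOf_eq, lt_max_iff]
      constructor
      · rintro (h | h)
        · linarith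
        · linarith
      · intro h; left; linarith
    have hsub : {ω | a + t < M ω} ⊆ ⋃ j, {ω | a + t < T j ω} := by
      intro ω hω
      rw [Set.mem_setOf_eq, hM_def, Finset.lt_sup'_iff] at hω
      obtain ⟨j, _, hj⟩ := hω
      exact Set.mem_iUnion.2 ⟨j, hj⟩
    have hmono : P {ω | t < f ω} ≤ ∑ j, P {ω | a + t < T j ω} := by
      rw [hset]
      exact le_trans (measure_mono hsub) (measure_iUnion_fintype_le _ _)
    have hfin : ∑ j, P {ω | a + t < T j ω} ≠ ⊤ :=
      (ENNReal.sum_lt_top.mpr (fun j _ => measure_lt_top _ _)).ne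
    have h2 : (P {ω | t < f ω}).toReal ≤ ∑ j, (P {ω | a + t < T j ω}).toReal := by
      rw [← ENNReal.toReal_sum (fun j _ => measure_ne_top _ _)]
      exact ENNReal.toReal_mono hfin hmono
    refine h2.trans ?_
    have hat : 0 < a + t := by linarith
    have h3 : ∀ j : Fin (2*N), (P {ω | a + t < T j ω}).toReal
        ≤ 2*σbar/((a+t)*Real.sqrt (2*π)) * Real.exp (-(a+t)^2/(2*σbar^2)) :=
      fun j => hTtail j (a+t) hat
    calc ∑ j, (P {ω | a + t < T j ω}).toReal
        ≤ ∑ _j : Fin (2*N), 2*σbar/((a+t)*Real.sqrt (2*π)) * Real.exp (-(a+t)^2/(2*σbar^2)) :=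
          Finset.sum_le_sum (fun j _ => h3 j)
      _ = (2*N) * (2*σbar/((a+t)*Real.sqrt (2*π)) * Real.exp (-(a+t)^2/(2*σbar^2))) := by
          rw [Finset.sum_const, Finset.card_univ, Fintype.card_fin, nsmul_eq_mul]
          push_cast
          ring
      _ ≤ C * Real.exp (-k * t) := by
          have hsq : Real.sqrt (2*π) > 0 := by positivity
          have e1 : 2*σbar/((a+t)*Real.sqrt (2*π)) ≤ 2*σbar/(a*Real.sqrt (2*π)) := by
            gcongr
            linarith
          have e2 : Real.exp (-(a+t)^2/(2*σbar^2))
              ≤ Real.exp (-a^2/(2*σbar^2)) * Real.exp (-k * t) := by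
            rw [← Real.exp_add, Real.exp_le_exp, hk_def]
            have e : -(a/σbar^2) * t = (-(2*a*t))/(2*σbar^2) := by
              field_simp
            rw [e, ← add_div, div_le_div_iff₀ (by positivity) (by positivity)]
            nlinarith [sq_nonneg t, sq_nonneg σbar]
          have base : 2*σbar/((a+t)*Real.sqrt (2*π)) * Real.exp (-(a+t)^2/(2*σbar^2))
              ≤ (2*σbar/(a*Real.sqrt (2*π)) * Real.exp (-a^2/(2*σbar^2))) * Real.exp (-k * t) := by
            calc 2*σbar/((a+t)*Real.sqrt (2*π)) * Real.exp (-(a+t)^2/(2*σbar^2))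
                ≤ 2*σbar/(a*Real.sqrt (2*π)) * (Real.exp (-a^2/(2*σbar^2)) * Real.exp (-k * t)) :=
                  mul_le_mul e1 e2 (Real.exp_pos _).le (by positivity)
              _ = (2*σbar/(a*Real.sqrt (2*π)) * Real.exp (-a^2/(2*σbar^2))) * Real.exp (-k * t) := by
                  ring
          have h2N : (0:ℝ) ≤ 2*N := by positivity
          calc (2*(N:ℝ)) * (2*σbar/((a+t)*Real.sqrt (2*π)) * Real.exp (-(a+t)^2/(2*σbar^2)))
              ≤ (2*(N:ℝ)) * ((2*σbar/(a*Real.sqrt (2*π)) * Real.exp (-a^2/(2*σbar^2))) * Real.exp (-k * t)) :=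
                mul_le_mul_of_nonneg_left base h2N
            _ = C * Real.exp (-k * t) := by rw [hC_def]; ring
  -- integrate the bound
  have hg_int : IntegrableOn (fun t => C * Real.exp (-k * t)) (Set.Ioi (0:ℝ)) :=
    (exp_neg_integrableOn_Ioi 0 hk).const_mul C
  have hlhs_meas : Measurable (fun t : ℝ => (P {ω | t < f ω}).toReal) := by
    apply Measurable.ennreal_toReal
    exact Antitone.measurable (fun s t hst => measure_mono (fun ω h => lt_of_le_of_lt hst h))
  have hlhs_int : IntegrableOn (fun t : ℝ => (P {ω | t < f ω}).toReal) (Set.Ioi (0:ℝ)) := by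
    refine Integrable.mono' hg_int hlhs_meas.aestronglyMeasurable ?_
    rw [ae_restrict_iff' measurableSet_Ioi]
    refine ae_of_all _ fun t ht => ?_
    rw [Real.norm_of_nonneg ENNReal.toReal_nonneg]
    exact hpt t ht
  have step3 : ∫ t in Set.Ioi (0:ℝ), (P {ω | t < f ω}).toReal
      ≤ ∫ t in Set.Ioi (0:ℝ), C * Real.exp (-k * t) :=
    setIntegral_mono_on hlhs_int hg_int measurableSet_Ioi hpt
  have step4 : ∫ t in Set.Ioi (0:ℝ), C * Real.exp (-k * t) = C / k := by
    rw [integral_const_mul, aux_int_exp hk]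
    ring
  -- final computation
  have hfinal : a + C / k = σbar * Real.sqrt (2 * L) + σbar * Real.sqrt (2 / π) / L := by
    have hπ := Real.pi_pos
    have ha2 : a^2 = 2 * L * σbar^2 := by
      rw [ha_def, mul_pow, Real.sq_sqrt (by positivity)]
      ring
    have hexp : Real.exp (-a^2/(2*σbar^2)) = ((N:ℝ))⁻¹ := by
      rw [ha2]
      have h0 : -(2*L*σbar^2)/(2*σbar^2) = -L := by
        field_simp
      rw [h0, Real.exp_neg, hL_def, Real.exp_log hNpos]
    have h2pi : Real.sqrt (2/π) = 2 / Real.sqrt (2*π) := by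
      rw [eq_div_iff (by positivity : Real.sqrt (2*π) ≠ 0), ← Real.sqrt_mul (by positivity)]
      have h1 : 2/π * (2*π) = 2^2 := by
        field_simp
      rw [h1, Real.sqrt_sq (by norm_num)]
    have key : C / k = σbar * Real.sqrt (2/π) / L := by
      rw [hC_def, hk_def, hexp, h2pi]
      have hsp : Real.sqrt (2*π) ≠ 0 := by positivity
      have hNne : ((N:ℝ)) ≠ 0 := hNpos.ne'
      field_simp
      ring_nf
      rw [ha2]
      ring
    rw [key]
  calc ∫ ω, M ω ∂P ≤ a + ∫ ω, f ω ∂P := step1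
    _ = a + ∫ t in Set.Ioi (0:ℝ), (P {ω | t < f ω}).toReal := by rw [step2]
    _ ≤ a + C / k := by rw [← step4]; linarith [step3]
    _ = _ := hfinal
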